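/- (Claim 1, second part.) Assume t_s + t_k ≤ t_e. If (p, q) is P1-feasible and q ≤ 1/2, then (t_s + t_k) F(p) ≥ (1−q) t_e ≥ t_e/2, and consequently F(p) ≥ 1/2. -/

import Mathlib

/-- Feasibility for problem (P1). -/
def P1Feasible (πlo πhi tk te ts : ℝ) (F : ℝ → ℝ) (p q : ℝ) : Prop :=
  πlo ≤ p ∧ p ≤ πhi ∧ 0 ≤ q ∧ q ≤ 1 ∧ 0 < F p ∧
  (1 - q) * te * (1 - F p) ≤ tk ∧
  tk * (1 - F p) + (1 - q) * te * F p ≤ ts * F p ∧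
  q * te ≤ ts

/-- Split `(1 - q) t_e` along `1 - F p` and `F p`: the first feasibility constraint bounds one
part by `t_k`, the second bounds the other by `t_s F p - t_k (1 - F p)`. -/
theorem P1Feasible.one_sub_mul_le_mul {πlo πhi tk te ts p q : ℝ} {F : ℝ → ℝ}
    (h : P1Feasible πlo πhi tk te ts F p q) : (1 - q) * te ≤ (ts + tk) * F p := by
  obtain ⟨-, -, -, -, -, hspill, hdeadline, -⟩ := h
  calc (1 - q) * te = (1 - q) * te * (1 - F p) + (1 - q) * te * F p := by ring
    _ ≤ tk + (ts * F p - tk * (1 - F p)) := by linarith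
    _ = (ts + tk) * F p := by ring

theorem stmt_4
    (πlo πhi : ℝ) (F : ℝ → ℝ)
    (tk te ts : ℝ) (hte : 0 < te)
    (hle : ts + tk ≤ te)
    (p q : ℝ)
    (hfeas : P1Feasible πlo πhi tk te ts F p q)
    (hq : q ≤ 1 / 2) :
    (1 - q) * te ≤ (ts + tk) * F p ∧ te / 2 ≤ (1 - q) * te ∧ 1 / 2 ≤ F p := by
  have hcost := hfeas.one_sub_mul_le_mul
  have hhalf : te / 2 ≤ (1 - q) * te := by nlinarith
  have hFpos : 0 < F p := hfeas.2.2.2.2.1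
  have hteF : te * (1 / 2) ≤ te * F p :=
    calc te * (1 / 2) ≤ (1 - q) * te := by linarith
      _ ≤ (ts + tk) * F p := hcost
      _ ≤ te * F p := mul_le_mul_of_nonneg_right hle hFpos.le
  exact ⟨hcost, hhalf, le_of_mul_le_mul_left hteF hte⟩
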